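/- arXiv:1901.05501 — 7 statements merged into one kernel-verified Lean document; each statement's English description precedes it below -/
import Mathlib

section
/- Let (Ω, 𝓕, P) be a probability space, u ∈ ℝ, r a positive integer, and X_1, …, X_r real-valued random variables such that the exceedance probabilities of triples are shift-invariant: for all integers i ≥ 1 and 0 ≤ j ≤ k with i + k ≤ r one has P(X_i > u, X_{i+j} > u, X_{i+k} > u) = P(X_1 > u, X_{1+j} > u, X_{1+k} > u). Then E[(∑_{i=1}^r 1{X_i > u})³] ≤ r · P(X_1 > u) + 6 · ∑_{k=1}^{r−1} ∑_{j=1}^{k} (r − k) · P(X_1 > u, X_{1+j} > u, X_{1+k} > u). -/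
/-!
For events `A i`, the indicators are idempotent, so expanding the cube of `N = ∑ 1_{A i}` and
grouping ordered triples of indices by their pattern gives
`N³ = N + 6 ∑_{a < b ≤ c} 1_{A a} 1_{A b} 1_{A c}`: the terms with `b = c` collect the triples
with exactly two distinct indices. Taking expectations and writing `b = a + j`, `c = a + k`,
shift invariance makes each term depend on `(j, k)` only, and the pair `(j, k)` occurs for
`r - k` values of `a`.
-/

open MeasureTheory Finset
open scoped ENNReal

theorem sum_sq_of_isIdempotentElem {R : Type*} [CommSemiring R] {f : ℕ → R}
    (hf : ∀ i, IsIdempotentElem (f i)) (n : ℕ) :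
    (∑ i ∈ range n, f i) ^ 2
      = ∑ i ∈ range n, f i + 2 * ∑ b ∈ range n, ∑ a ∈ range b, f a * f b := by
  induction n with
  | zero => simp
  | succ n ih =>
    rw [sum_range_succ (fun b => ∑ a ∈ range b, f a * f b), ← sum_mul, sum_range_succ]
    calc (∑ i ∈ range n, f i + f n) ^ 2
        = (∑ i ∈ range n, f i) ^ 2 + 2 * (∑ i ∈ range n, f i) * f n + f n * f n := by ring
      _ = _ := by rw [ih, (hf n).eq]; ring

theorem sum_pow_three_of_isIdempotentElem {R : Type*} [CommSemiring R] {f : ℕ → R}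
    (hf : ∀ i, IsIdempotentElem (f i)) (n : ℕ) :
    (∑ i ∈ range n, f i) ^ 3
      = ∑ i ∈ range n, f i
        + 6 * ∑ c ∈ range n, ∑ b ∈ range (c + 1), ∑ a ∈ range b, f a * f b * f c := by
  induction n with
  | zero => simp
  | succ n ih =>
    have hn : f n * f n = f n := (hf n).eq
    have hstep : ∑ b ∈ range (n + 1), ∑ a ∈ range b, f a * f b * f n
        = (∑ b ∈ range n, ∑ a ∈ range b, f a * f b) * f n + (∑ i ∈ range n, f i) * f n := by
      simp only [sum_range_succ, sum_mul, mul_assoc, hn]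
    rw [sum_range_succ (fun c => ∑ b ∈ range (c + 1), _), hstep, sum_range_succ]
    calc (∑ i ∈ range n, f i + f n) ^ 3
        = (∑ i ∈ range n, f i) ^ 3 + 3 * (∑ i ∈ range n, f i) ^ 2 * f n
          + 3 * (∑ i ∈ range n, f i) * (f n * f n) + f n * f n * f n := by ring
      _ = _ := by rw [ih, sum_sq_of_isIdempotentElem hf, hn, hn]; ring

theorem sum_triangle_reindex {M : Type*} [AddCommMonoid M] (g : ℕ → ℕ → ℕ → M) (n : ℕ) :
    ∑ c ∈ range n, ∑ b ∈ range (c + 1), ∑ a ∈ range b, g a b c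
      = ∑ k ∈ Icc 1 (n - 1), ∑ j ∈ Icc 1 k, ∑ a ∈ range (n - k), g a (a + j) (a + k) := by
  simp only [sum_sigma']
  refine sum_bij' (fun x _ => ⟨x.1 - x.2.2, x.2.1 - x.2.2, x.2.2⟩)
    (fun y _ => ⟨y.2.2 + y.1, y.2.2 + y.2.1, y.2.2⟩) ?_ ?_ ?_ ?_ ?_ <;> rintro ⟨c, b, a⟩ <;>
    simp only [mem_sigma, mem_range, mem_Icc, Sigma.mk.injEq, heq_eq_eq, and_true] <;> intro h
  all_goals first | omega | congr 1 <;> omega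

theorem sum_triangle_eq_of_shift_invariant {M : Type*} [AddCommMonoid M] {g : ℕ → ℕ → ℕ → M}
    {h : ℕ → ℕ → M} {n : ℕ} (hg : ∀ a j k, j ≤ k → a + k < n → g a (a + j) (a + k) = h j k) :
    ∑ c ∈ range n, ∑ b ∈ range (c + 1), ∑ a ∈ range b, g a b c
      = ∑ k ∈ Icc 1 (n - 1), ∑ j ∈ Icc 1 k, (n - k) • h j k := by
  rw [sum_triangle_reindex]
  refine sum_congr rfl fun k _ => sum_congr rfl fun j hj => ?_
  rw [mem_Icc] at hj
  rw [sum_congr rfl fun a ha => hg a j k hj.2 (by rw [mem_range] at ha; omega), sum_const,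
    card_range]

theorem lintegral_pow_three_sum_indicator_le {Ω : Type*} [MeasurableSpace Ω] (μ : Measure Ω)
    (A : ℕ → Set Ω) (n : ℕ) :
    ∫⁻ ω, (∑ i ∈ range n, (A i).indicator 1 ω) ^ 3 ∂μ
      ≤ ∑ i ∈ range n, μ (A i)
        + 6 * ∑ c ∈ range n, ∑ b ∈ range (c + 1), ∑ a ∈ range b, μ (A a ∩ (A b ∩ A c)) := by
  have hidem : ∀ i ω, IsIdempotentElem ((A i).indicator (1 : Ω → ℝ≥0∞) ω) := fun i ω => by
    by_cases h : ω ∈ A i <;> simp [IsIdempotentElem, h]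
  -- The events need not be measurable and `lintegral` is only superadditive, so we first
  -- dominate by indicators of measurable hulls, which does not change the measures.
  have hmeas : ∀ s, MeasurableSet (toMeasurable μ s) := measurableSet_toMeasurable μ
  calc ∫⁻ ω, (∑ i ∈ range n, (A i).indicator 1 ω) ^ 3 ∂μ
      = ∫⁻ ω, ∑ i ∈ range n, (A i).indicator 1 ω + 6 * ∑ c ∈ range n, ∑ b ∈ range (c + 1),
          ∑ a ∈ range b, (A a ∩ (A b ∩ A c)).indicator 1 ω ∂μ := by
        refine lintegral_congr fun ω => ?_
        simp only [sum_pow_three_of_isIdempotentElem (hidem · ω), Set.inter_indicator_one,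
          Pi.mul_apply, mul_assoc]
    _ ≤ ∫⁻ ω, ∑ i ∈ range n, (toMeasurable μ (A i)).indicator 1 ω + 6 * ∑ c ∈ range n,
          ∑ b ∈ range (c + 1), ∑ a ∈ range b,
            (toMeasurable μ (A a ∩ (A b ∩ A c))).indicator 1 ω ∂μ := by
        gcongr <;> exact subset_toMeasurable μ _
    _ = _ := by
        simp (disch := fun_prop (disch := exact hmeas _)) only [lintegral_add_left,
          lintegral_const_mul, lintegral_finsetSum, lintegral_indicator_one (hmeas _),
          measure_toMeasurable]

theorem stmt0_general {Ω : Type*} [MeasurableSpace Ω] (P : Measure Ω)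
    (u : ℝ) (r : ℕ) (X : ℕ → Ω → ℝ)
    (hshift : ∀ i j k : ℕ, 1 ≤ i → j ≤ k → i + k ≤ r →
      P {ω | X i ω > u ∧ X (i + j) ω > u ∧ X (i + k) ω > u}
        = P {ω | X 1 ω > u ∧ X (1 + j) ω > u ∧ X (1 + k) ω > u}) :
    ∫⁻ ω, (∑ i ∈ Finset.Icc 1 r, if X i ω > u then (1 : ℝ≥0∞) else 0) ^ 3 ∂P
      ≤ (r : ℝ≥0∞) * P {ω | X 1 ω > u}
        + 6 * ∑ k ∈ Finset.Icc 1 (r - 1), ∑ j ∈ Finset.Icc 1 k,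
            ((r : ℝ≥0∞) - (k : ℝ≥0∞)) *
              P {ω | X 1 ω > u ∧ X (1 + j) ω > u ∧ X (1 + k) ω > u} := by
  set A : ℕ → Set Ω := fun i => {ω | X (1 + i) ω > u}
  have hcount : ∀ ω, ∑ i ∈ Icc 1 r, (if X i ω > u then (1 : ℝ≥0∞) else 0)
      = ∑ i ∈ range r, (A i).indicator 1 ω := fun ω => by
    rw [← Ico_add_one_right_eq_Icc, sum_Ico_eq_sum_range, add_tsub_cancel_right]
    simp [A, Set.indicator_apply]
  have hsingle : ∀ i ∈ range r, P (A i) = P {ω | X 1 ω > u} := fun i hi => by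
    simpa [A] using hshift (1 + i) 0 0 le_self_add le_rfl (by rw [mem_range] at hi; omega)
  have htriple : ∀ a j k, j ≤ k → a + k < r →
      P (A a ∩ (A (a + j) ∩ A (a + k)))
        = P {ω | X 1 ω > u ∧ X (1 + j) ω > u ∧ X (1 + k) ω > u} := fun a j k hjk hak => by
    have hs := hshift (1 + a) j k le_self_add hjk (by omega)
    rwa [add_assoc, add_assoc] at hs
  calc _ = ∫⁻ ω, (∑ i ∈ range r, (A i).indicator 1 ω) ^ 3 ∂P := by simp_rw [hcount]
    _ ≤ _ := lintegral_pow_three_sum_indicator_le P A r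
    _ = _ := by
      rw [sum_congr rfl hsingle, sum_const, card_range, nsmul_eq_mul,
        sum_triangle_eq_of_shift_invariant (g := fun a b c => P (A a ∩ (A b ∩ A c))) htriple]
      simp only [nsmul_eq_mul, ENNReal.natCast_sub]

/-- The counting inequality underlying Lemma C.1: the third moment of the number of
exceedances over a threshold `u` of random variables whose triple exceedance
probabilities are shift-invariant. -/
theorem stmt0 {Ω : Type*} [MeasurableSpace Ω] (P : Measure Ω) [IsProbabilityMeasure P]
    (u : ℝ) (r : ℕ) (hr : 0 < r) (X : ℕ → Ω → ℝ)
    (hshift : ∀ i j k : ℕ, 1 ≤ i → j ≤ k → i + k ≤ r →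
      P {ω | X i ω > u ∧ X (i + j) ω > u ∧ X (i + k) ω > u}
        = P {ω | X 1 ω > u ∧ X (1 + j) ω > u ∧ X (1 + k) ω > u}) :
    ∫⁻ ω, (∑ i ∈ Finset.Icc 1 r, if X i ω > u then (1 : ℝ≥0∞) else 0) ^ 3 ∂P
      ≤ (r : ℝ≥0∞) * P {ω | X 1 ω > u}
        + 6 * ∑ k ∈ Finset.Icc 1 (r - 1), ∑ j ∈ Finset.Icc 1 k,
            ((r : ℝ≥0∞) - (k : ℝ≥0∞)) *
              P {ω | X 1 ω > u ∧ X (1 + j) ω > u ∧ X (1 + k) ω > u} :=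
  stmt0_general P u r X hshift
end

section
/- Let (Ω, 𝓕, P) be a probability space and (X_i)_{i≥1} real-valued random variables. Let (r_n)_{n≥1} be positive integers, (w_n)_{n≥1} real thresholds, and (v_n)_{n≥1} positive reals. Assume: (i) for every n, for all integers i ≥ 1 and 0 ≤ j ≤ k with i + k ≤ r_n, P(X_i > w_n, X_{i+j} > w_n, X_{i+k} > w_n) = P(X_1 > w_n, X_{1+j} > w_n, X_{1+k} > w_n); (ii) 0 < P(X_1 > w_n) ≤ c₀ · v_n for all n, for some constant c₀ > 0; (iii) there exist nonnegative numbers s̃_n(j,k), for 1 ≤ j ≤ k ≤ r_n − 1, with s̃_n(j,k) ≥ P(X_{1+j} > w_n, X_{1+k} > w_n | X_1 > w_n) and sup_n ∑_{1≤j≤k≤r_n−1} s̃_n(j,k) < ∞. Then there is a constant K such that for all n, E[(∑_{i=1}^{r_n} 1{X_i > w_n})³] ≤ K · r_n · v_n. -/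
/-!
Expanding the cube, `E[N³]` is the sum over all triples `(a, b, c)` of block indices of
`P(X_a > w, X_b > w, X_c > w)`. This summand is symmetric, so up to a factor `3! = 6` only
nondecreasing triples `a ≤ b ≤ c` matter, and by shift invariance such a triple contributes
`P(X₁ > w, X_{1+j} > w, X_{1+k} > w)` with `j = b - a ≤ k = c - a < r`. A nondecreasing triple is
determined by `a` and its gaps, so each pair `(j, k)` occurs at most `r` times. Finally the
pair sum is at most `P(X₁ > w) (1 + 2 ∑ s̃(j, k))`: the terms with `j = 0` repeat the diagonal
`j = k`, and every term with `j ≥ 1` is bounded by the conditional majorant.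
-/

open MeasureTheory
open scoped ENNReal

open Finset Fintype

theorem sum_piFinset_le_factorial_nsmul_sum_monotone {α M : Type*} [LinearOrder α]
    [AddCommMonoid M] [PartialOrder M] [IsOrderedAddMonoid M] [CanonicallyOrderedAdd M] {n : ℕ}
    (s : Finset α) (f : (Fin n → α) → M) (hf : ∀ (σ : Equiv.Perm (Fin n)) t, f (t ∘ σ) = f t) :
    ∑ t ∈ piFinset fun _ => s, f t ≤
      n.factorial • ∑ t ∈ piFinset fun _ => s, if Monotone t then f t else 0 := by
  set F : (Fin n → α) → M := fun t => if Monotone t then f t else 0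
  have hperm : ∀ σ : Equiv.Perm (Fin n),
      ∑ t ∈ piFinset (fun _ => s), F (t ∘ σ) = ∑ t ∈ piFinset (fun _ => s), F t := fun σ =>
    sum_nbij' (· ∘ σ) (· ∘ σ.symm)
      (fun t ht => mem_piFinset.2 fun _ => mem_piFinset.1 ht _)
      (fun t ht => mem_piFinset.2 fun _ => mem_piFinset.1 ht _)
      (fun t _ => by ext; simp) (fun t _ => by ext; simp) (fun _ _ => rfl)
  calc ∑ t ∈ piFinset fun _ => s, f t
      ≤ ∑ t ∈ piFinset fun _ => s, ∑ σ : Equiv.Perm (Fin n), F (t ∘ σ) := by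
        refine sum_le_sum fun t _ => ?_
        calc f t = F (t ∘ Tuple.sort t) := by simp [F, Tuple.monotone_sort, hf]
          _ ≤ _ := single_le_sum (f := fun σ : Equiv.Perm (Fin n) => F (t ∘ σ))
            (fun _ _ => zero_le) (mem_univ _)
    _ = ∑ σ : Equiv.Perm (Fin n), ∑ t ∈ piFinset fun _ => s, F t := by
        rw [sum_comm]; exact sum_congr rfl fun σ _ => hperm σ
    _ = n.factorial • ∑ t ∈ piFinset fun _ => s, F t := by
        rw [sum_const, card_univ, Fintype.card_perm, Fintype.card_fin]

theorem lintegral_sum_indicator_one_le {Ω ι : Type*} [MeasurableSpace Ω] (μ : Measure Ω)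
    (s : Finset ι) (E : ι → Set Ω) :
    ∫⁻ ω, ∑ i ∈ s, (E i).indicator 1 ω ∂μ ≤ ∑ i ∈ s, μ (E i) :=
  calc ∫⁻ ω, ∑ i ∈ s, (E i).indicator 1 ω ∂μ
      ≤ ∫⁻ ω, ∑ i ∈ s, (toMeasurable μ (E i)).indicator 1 ω ∂μ :=
        lintegral_mono fun ω => sum_le_sum fun i _ =>
          Set.indicator_le_indicator_of_subset (subset_toMeasurable μ _) (fun _ => zero_le) ω
    _ = ∑ i ∈ s, μ (E i) := by
        rw [lintegral_finsetSum _ fun i _ =>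
          measurable_one.indicator (measurableSet_toMeasurable μ _)]
        simp_rw [lintegral_indicator_one (measurableSet_toMeasurable μ _), measure_toMeasurable]

theorem lintegral_pow_sum_boole_le {Ω ι : Type*} [MeasurableSpace Ω] (μ : Measure Ω)
    (p : ι → Ω → Prop) [∀ i ω, Decidable (p i ω)] (s : Finset ι) (m : ℕ) :
    ∫⁻ ω, (∑ i ∈ s, if p i ω then (1 : ℝ≥0∞) else 0) ^ m ∂μ ≤
      ∑ t ∈ piFinset fun _ : Fin m => s, μ {ω | ∀ k, p (t k) ω} := by
  have hexpand : ∀ ω, (∑ i ∈ s, if p i ω then (1 : ℝ≥0∞) else 0) ^ m =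
      ∑ t ∈ piFinset fun _ : Fin m => s, {ω | ∀ k, p (t k) ω}.indicator 1 ω := fun ω => by
    rw [← Fin.prod_const, prod_univ_sum]
    simp only [Fintype.prod_boole, Set.indicator_apply, Set.mem_ofPred_eq, Pi.one_apply]
    -- the two sides differ only in their `Decidable` instances
    convert rfl
  simp_rw [hexpand]
  exact lintegral_sum_indicator_one_le μ _ _

theorem sum_range_sum_range_succ_le_of_diag (θ : ℕ → ℕ → ℝ≥0∞) (hθ : ∀ k, θ 0 k = θ k k)
    (r : ℕ) :
    ∑ k ∈ range r, ∑ j ∈ range (k + 1), θ j k ≤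
      θ 0 0 + 2 * ∑ k ∈ Icc 1 (r - 1), ∑ j ∈ Icc 1 k, θ j k := by
  have split_zero : ∀ (m : ℕ) (f : ℕ → ℝ≥0∞), ∑ i ∈ range (m + 1), f i = f 0 + ∑ i ∈ Icc 1 m, f i :=
    fun m f => by rw [range_eq_Ico, sum_eq_sum_Ico_succ_bot (by omega : 0 < m + 1), zero_add,
      Ico_add_one_right_eq_Icc]
  cases r with
  | zero => simp
  | succ r =>
    have hdiag : ∀ k ∈ Icc 1 r, θ 0 k ≤ ∑ j ∈ Icc 1 k, θ j k := fun k hk =>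
      hθ k ▸ single_le_sum (f := fun j => θ j k) (fun _ _ => zero_le)
        (mem_Icc.2 ⟨(mem_Icc.1 hk).1, le_rfl⟩)
    calc ∑ k ∈ range (r + 1), ∑ j ∈ range (k + 1), θ j k
        = θ 0 0 + (∑ k ∈ Icc 1 r, θ 0 k + ∑ k ∈ Icc 1 r, ∑ j ∈ Icc 1 k, θ j k) := by
          simp only [split_zero, sum_add_distrib, Icc_eq_empty_of_lt zero_lt_one, Finset.sum_empty,
            add_zero]
      _ ≤ θ 0 0 + 2 * ∑ k ∈ Icc 1 (r + 1 - 1), ∑ j ∈ Icc 1 k, θ j k := by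
          rw [Nat.add_sub_cancel, two_mul]
          gcongr with k hk
          exact hdiag k hk

theorem sum_monotone_triple_le (r : ℕ) (g : ℕ → ℕ → ℝ≥0∞) :
    ∑ t ∈ piFinset fun _ : Fin 3 => Icc 1 r,
        (if Monotone t then g (t 1 - t 0) (t 2 - t 0) else 0) ≤
      r * ∑ k ∈ range r, ∑ j ∈ range (k + 1), g j k := by
  set D := (range r ×ˢ range r).filter fun p : ℕ × ℕ => p.2 ≤ p.1
  have hD : ∑ p ∈ D, g p.2 p.1 = ∑ k ∈ range r, ∑ j ∈ range (k + 1), g j k :=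
    sum_finset_product _ _ _ fun p => by simp only [D, mem_filter, mem_product, mem_range]; omega
  set φ : (Fin 3 → ℕ) → ℕ × ℕ × ℕ := fun t => (t 0, t 2 - t 0, t 1 - t 0)
  set T := (piFinset fun _ : Fin 3 => Icc 1 r).filter Monotone
  have hle : ∀ t ∈ T, t 0 ≤ t 1 ∧ t 1 ≤ t 2 := fun t ht =>
    ⟨(mem_filter.1 ht).2 (by decide), (mem_filter.1 ht).2 (by decide)⟩
  have hinj : Set.InjOn φ T := by
    intro t ht t' ht' h
    simp only [φ, Prod.mk.injEq] at h
    obtain ⟨h0, h2, h1⟩ := h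
    have := hle t ht; have := hle t' ht'
    have e1 : t 1 = t' 1 := by omega
    have e2 : t 2 = t' 2 := by omega
    funext i; fin_cases i
    exacts [h0, e1, e2]
  have hmaps : T.image φ ⊆ Icc 1 r ×ˢ D := by
    intro y hy
    obtain ⟨t, ht, rfl⟩ := mem_image.1 hy
    have hmem := fun i => mem_Icc.1 (mem_piFinset.1 (mem_filter.1 ht).1 i)
    have := hmem 0; have := hmem 2; have := hle t ht
    simp only [φ, D, mem_product, mem_filter, mem_range, mem_Icc]
    omega
  calc ∑ t ∈ piFinset fun _ : Fin 3 => Icc 1 r,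
        (if Monotone t then g (t 1 - t 0) (t 2 - t 0) else 0)
      = ∑ t ∈ T, g (φ t).2.2 (φ t).2.1 := (sum_filter _ _).symm
    _ = ∑ y ∈ T.image φ, g y.2.2 y.2.1 :=
        (sum_image (f := fun y : ℕ × ℕ × ℕ => g y.2.2 y.2.1) hinj).symm
    _ ≤ ∑ y ∈ Icc 1 r ×ˢ D, g y.2.2 y.2.1 := sum_le_sum_of_subset hmaps
    _ = r * ∑ k ∈ range r, ∑ j ∈ range (k + 1), g j k := by
        simp only [sum_product, sum_const, Nat.card_Icc, nsmul_eq_mul, hD, Nat.add_sub_cancel]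

section Exceedances

variable {Ω : Type*} [MeasurableSpace Ω] (P : Measure Ω) (X : ℕ → Ω → ℝ) (W : ℝ) (r : ℕ)

theorem measure_forall_exceed_eq_of_monotone
    (hshift : ∀ i j k : ℕ, 1 ≤ i → j ≤ k → i + k ≤ r →
      P {ω | X i ω > W ∧ X (i + j) ω > W ∧ X (i + k) ω > W}
        = P {ω | X 1 ω > W ∧ X (1 + j) ω > W ∧ X (1 + k) ω > W})
    {t : Fin 3 → ℕ} (ht : t ∈ piFinset fun _ => Icc 1 r) (hmono : Monotone t) :
    P {ω | ∀ k, X (t k) ω > W} =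
      P {ω | X 1 ω > W ∧ X (1 + (t 1 - t 0)) ω > W ∧ X (1 + (t 2 - t 0)) ω > W} := by
  have h01 : t 0 ≤ t 1 := hmono (by decide)
  have h12 : t 1 ≤ t 2 := hmono (by decide)
  have h0 := mem_Icc.1 (mem_piFinset.1 ht 0)
  have h2 := mem_Icc.1 (mem_piFinset.1 ht 2)
  rw [← hshift (t 0) (t 1 - t 0) (t 2 - t 0) h0.1 (by omega) (by omega),
    Nat.add_sub_cancel' h01, Nat.add_sub_cancel' (h01.trans h12)]
  simp only [Fin.forall_fin_succ, IsEmpty.forall_iff, and_true]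
  rfl

theorem sum_triangle_measure_exceed_le (s' : ℕ → ℕ → ℝ) (hA : P {ω | X 1 ω > W} ≠ ∞)
    (hnonneg : ∀ j k, 1 ≤ j → j ≤ k → k ≤ r - 1 → 0 ≤ s' j k)
    (hmaj : ∀ j k, 1 ≤ j → j ≤ k → k ≤ r - 1 →
      P ({ω | X (1 + j) ω > W ∧ X (1 + k) ω > W} ∩ {ω | X 1 ω > W})
          / P {ω | X 1 ω > W} ≤ ENNReal.ofReal (s' j k)) :
    ∑ k ∈ range r, ∑ j ∈ range (k + 1),
        P {ω | X 1 ω > W ∧ X (1 + j) ω > W ∧ X (1 + k) ω > W} ≤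
      P {ω | X 1 ω > W} *
        (1 + 2 * ENNReal.ofReal (∑ k ∈ Icc 1 (r - 1), ∑ j ∈ Icc 1 k, s' j k)) := by
  set A := P {ω | X 1 ω > W}
  have hpair : ∀ k ∈ Icc 1 (r - 1), ∀ j ∈ Icc 1 k,
      P {ω | X 1 ω > W ∧ X (1 + j) ω > W ∧ X (1 + k) ω > W} ≤ ENNReal.ofReal (s' j k) * A := by
    intro k hk j hj
    rw [mem_Icc] at hk hj
    have h := hmaj j k hj.1 hj.2 hk.2
    rw [ENNReal.div_le_iff_le_mul (Or.inr ENNReal.ofReal_ne_top) (Or.inl hA)] at h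
    convert h using 2
    ext ω
    simp only [Set.mem_ofPred_eq, Set.mem_inter_iff]
    tauto
  have hnonneg' : ∀ k ∈ Icc 1 (r - 1), ∀ j ∈ Icc 1 k, 0 ≤ s' j k := fun k hk j hj =>
    hnonneg j k (mem_Icc.1 hj).1 (mem_Icc.1 hj).2 (mem_Icc.1 hk).2
  calc ∑ k ∈ range r, ∑ j ∈ range (k + 1),
        P {ω | X 1 ω > W ∧ X (1 + j) ω > W ∧ X (1 + k) ω > W}
      ≤ P {ω | X 1 ω > W ∧ X (1 + 0) ω > W ∧ X (1 + 0) ω > W} + 2 * ∑ k ∈ Icc 1 (r - 1),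
          ∑ j ∈ Icc 1 k, P {ω | X 1 ω > W ∧ X (1 + j) ω > W ∧ X (1 + k) ω > W} :=
        sum_range_sum_range_succ_le_of_diag _
          (fun k => by simp only [add_zero, and_self_left, and_self]) r
    _ ≤ A + 2 * ∑ k ∈ Icc 1 (r - 1), ∑ j ∈ Icc 1 k, ENNReal.ofReal (s' j k) * A := by
        simp only [add_zero, and_self]
        gcongr with k hk j hj
        exact hpair k hk j hj
    _ = A * (1 + 2 * ENNReal.ofReal (∑ k ∈ Icc 1 (r - 1), ∑ j ∈ Icc 1 k, s' j k)) := by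
        rw [ENNReal.ofReal_sum_of_nonneg fun k hk => sum_nonneg (hnonneg' k hk)]
        rw [sum_congr rfl fun k hk => ENNReal.ofReal_sum_of_nonneg (hnonneg' k hk)]
        simp only [← sum_mul]
        ring

theorem lintegral_cube_sum_exceed_le (s' : ℕ → ℕ → ℝ) (hA : P {ω | X 1 ω > W} ≠ ∞)
    (hshift : ∀ i j k : ℕ, 1 ≤ i → j ≤ k → i + k ≤ r →
      P {ω | X i ω > W ∧ X (i + j) ω > W ∧ X (i + k) ω > W}
        = P {ω | X 1 ω > W ∧ X (1 + j) ω > W ∧ X (1 + k) ω > W})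
    (hnonneg : ∀ j k, 1 ≤ j → j ≤ k → k ≤ r - 1 → 0 ≤ s' j k)
    (hmaj : ∀ j k, 1 ≤ j → j ≤ k → k ≤ r - 1 →
      P ({ω | X (1 + j) ω > W ∧ X (1 + k) ω > W} ∩ {ω | X 1 ω > W})
          / P {ω | X 1 ω > W} ≤ ENNReal.ofReal (s' j k)) :
    ∫⁻ ω, (∑ i ∈ Icc 1 r, if X i ω > W then (1 : ℝ≥0∞) else 0) ^ 3 ∂P ≤
      6 * (r * (P {ω | X 1 ω > W} *
        (1 + 2 * ENNReal.ofReal (∑ k ∈ Icc 1 (r - 1), ∑ j ∈ Icc 1 k, s' j k)))) :=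
  calc ∫⁻ ω, (∑ i ∈ Icc 1 r, if X i ω > W then (1 : ℝ≥0∞) else 0) ^ 3 ∂P
      ≤ ∑ t ∈ piFinset fun _ : Fin 3 => Icc 1 r, P {ω | ∀ k, X (t k) ω > W} :=
        lintegral_pow_sum_boole_le P (fun i ω => X i ω > W) _ 3
    _ ≤ Nat.factorial 3 • ∑ t ∈ piFinset fun _ : Fin 3 => Icc 1 r,
          if Monotone t then P {ω | ∀ k, X (t k) ω > W} else 0 :=
        sum_piFinset_le_factorial_nsmul_sum_monotone _ _ fun σ t =>
          congrArg P (Set.ext fun ω => σ.forall_congr_right (q := fun k => X (t k) ω > W))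
    _ = 6 * ∑ t ∈ piFinset fun _ : Fin 3 => Icc 1 r, if Monotone t then
          P {ω | X 1 ω > W ∧ X (1 + (t 1 - t 0)) ω > W ∧ X (1 + (t 2 - t 0)) ω > W}
          else 0 := by
        rw [nsmul_eq_mul]
        congr 1
        refine sum_congr rfl fun t ht => ?_
        split_ifs with hmono
        · exact measure_forall_exceed_eq_of_monotone P X W r hshift ht hmono
        · rfl
    _ ≤ 6 * (r * ∑ k ∈ range r, ∑ j ∈ range (k + 1),
          P {ω | X 1 ω > W ∧ X (1 + j) ω > W ∧ X (1 + k) ω > W}) := by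
        gcongr
        exact sum_monotone_triple_le _ _
    _ ≤ _ := by
        gcongr
        exact sum_triangle_measure_exceed_le P X W r s' hA hnonneg hmaj

end Exceedances

theorem stmt1_general {Ω : Type*} [MeasurableSpace Ω] (P : Measure Ω)
    (X : ℕ → Ω → ℝ) (r : ℕ → ℕ) (w : ℕ → ℝ) (v : ℕ → ℝ) (c₀ : ℝ)
    (hshift : ∀ n, ∀ i j k : ℕ, 1 ≤ i → j ≤ k → i + k ≤ r n →
      P {ω | X i ω > w n ∧ X (i + j) ω > w n ∧ X (i + k) ω > w n}
        = P {ω | X 1 ω > w n ∧ X (1 + j) ω > w n ∧ X (1 + k) ω > w n})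
    (hmarg_le : ∀ n, P {ω | X 1 ω > w n} ≤ ENNReal.ofReal (c₀ * v n))
    (s' : ℕ → ℕ → ℕ → ℝ)
    (hs'nonneg : ∀ n j k, 1 ≤ j → j ≤ k → k ≤ r n - 1 → 0 ≤ s' n j k)
    (hs'maj : ∀ n j k, 1 ≤ j → j ≤ k → k ≤ r n - 1 →
      P ({ω | X (1 + j) ω > w n ∧ X (1 + k) ω > w n} ∩ {ω | X 1 ω > w n})
          / P {ω | X 1 ω > w n} ≤ ENNReal.ofReal (s' n j k))
    (hs'sum : ∃ S : ℝ, ∀ n,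
      ∑ k ∈ Finset.Icc 1 (r n - 1), ∑ j ∈ Finset.Icc 1 k, s' n j k ≤ S) :
    ∃ K : ℝ, ∀ n,
      ∫⁻ ω, (∑ i ∈ Finset.Icc 1 (r n), if X i ω > w n then (1 : ℝ≥0∞) else 0) ^ 3 ∂P
        ≤ ENNReal.ofReal (K * r n * v n) := by
  obtain ⟨S, hS⟩ := hs'sum
  have hS0 : 0 ≤ S := (sum_nonneg fun k hk => sum_nonneg fun j hj =>
    hs'nonneg 0 j k (mem_Icc.1 hj).1 (mem_Icc.1 hj).2 (mem_Icc.1 hk).2).trans (hS 0)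
  have hconst : ENNReal.ofReal (6 * (1 + 2 * S)) = 6 * (1 + 2 * ENNReal.ofReal S) := by
    rw [ENNReal.ofReal_mul (by positivity), ENNReal.ofReal_add zero_le_one (by positivity),
      ENNReal.ofReal_mul zero_le_two]
    simp only [ENNReal.ofReal_ofNat, ENNReal.ofReal_one]
  refine ⟨6 * (1 + 2 * S) * c₀, fun n => ?_⟩
  have hA : P {ω | X 1 ω > w n} ≠ ∞ := ne_top_of_le_ne_top ENNReal.ofReal_ne_top (hmarg_le n)
  calc _ ≤ 6 * (r n * (P {ω | X 1 ω > w n} *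
          (1 + 2 * ENNReal.ofReal (∑ k ∈ Icc 1 (r n - 1), ∑ j ∈ Icc 1 k, s' n j k)))) :=
        lintegral_cube_sum_exceed_le P X (w n) (r n) (s' n) hA (hshift n) (hs'nonneg n)
          (hs'maj n)
    _ ≤ 6 * (r n * (ENNReal.ofReal (c₀ * v n) * (1 + 2 * ENNReal.ofReal S))) := by
        gcongr
        exacts [hmarg_le n, hS n]
    _ = ENNReal.ofReal (6 * (1 + 2 * S) * c₀ * r n * v n) := by
        rw [show 6 * (1 + 2 * S) * c₀ * r n * v n = 6 * (1 + 2 * S) * r n * (c₀ * v n) by ring,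
          ENNReal.ofReal_mul (p := 6 * (1 + 2 * S) * r n) (by positivity),
          ENNReal.ofReal_mul (p := 6 * (1 + 2 * S)) (by positivity), hconst, ENNReal.ofReal_natCast]
        ring

/-- Lemma C.1 of the paper: under shift-invariance of triple exceedance probabilities,
a marginal bound `P(X₁ > wₙ) ≤ c₀ vₙ` and a summable majorant for the conditional
pair exceedance probabilities, the third moment of the number of exceedances in a
block of length `rₙ` is `O(rₙ vₙ)`. -/
theorem stmt1 {Ω : Type*} [MeasurableSpace Ω] (P : Measure Ω) [IsProbabilityMeasure P]
    (X : ℕ → Ω → ℝ) (r : ℕ → ℕ) (w : ℕ → ℝ) (v : ℕ → ℝ) (c₀ : ℝ)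
    (hr : ∀ n, 0 < r n) (hv : ∀ n, 0 < v n) (hc₀ : 0 < c₀)
    (hshift : ∀ n, ∀ i j k : ℕ, 1 ≤ i → j ≤ k → i + k ≤ r n →
      P {ω | X i ω > w n ∧ X (i + j) ω > w n ∧ X (i + k) ω > w n}
        = P {ω | X 1 ω > w n ∧ X (1 + j) ω > w n ∧ X (1 + k) ω > w n})
    (hmarg_pos : ∀ n, 0 < P {ω | X 1 ω > w n})
    (hmarg_le : ∀ n, P {ω | X 1 ω > w n} ≤ ENNReal.ofReal (c₀ * v n))
    (s' : ℕ → ℕ → ℕ → ℝ)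
    (hs'nonneg : ∀ n j k, 1 ≤ j → j ≤ k → k ≤ r n - 1 → 0 ≤ s' n j k)
    (hs'maj : ∀ n j k, 1 ≤ j → j ≤ k → k ≤ r n - 1 →
      P ({ω | X (1 + j) ω > w n ∧ X (1 + k) ω > w n} ∩ {ω | X 1 ω > w n})
          / P {ω | X 1 ω > w n} ≤ ENNReal.ofReal (s' n j k))
    (hs'sum : ∃ S : ℝ, ∀ n,
      ∑ k ∈ Finset.Icc 1 (r n - 1), ∑ j ∈ Finset.Icc 1 k, s' n j k ≤ S) :
    ∃ K : ℝ, ∀ n,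
      ∫⁻ ω, (∑ i ∈ Finset.Icc 1 (r n), if X i ω > w n then (1 : ℝ≥0∞) else 0) ^ 3 ∂P
        ≤ ENNReal.ofReal (K * r n * v n) :=
  stmt1_general P X r w v c₀ hshift hmarg_le s' hs'nonneg hs'maj hs'sum
end

section
/- Let X₀, X_j, Π, V be nonnegative random variables on a probability space (Ω, 𝓕, P) such that the pair (Π, V) is independent of the pair (X₀, X_j). Let ξ > 0, u > 0, assume E[Π^ξ] < ∞, and set X_k := Π · X_j + V. Then P(min{X₀, X_j, X_k} > u) ≤ P(min{X₀, X_j} > u) · P(V > u/2) + 2^ξ · u^{−ξ} · E[Π^ξ] · E[X_j^ξ · 1{X₀ > u, X_j > u}]. -/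
/-!
On `{X₀ > u, X_j > u, X_k > u}` either `V > u/2` or `Π X_j > u/2`. The first event is
independent of `{X₀ > u, X_j > u}`, so its probability factors. The second is bounded by Markov's
inequality for `(Π X_j)^ξ` restricted to `{X₀ > u, X_j > u}`, and the resulting moment factors
as `E[Π^ξ] E[X_j^ξ 1{X₀ > u, X_j > u}]` because `Π` is independent of `(X₀, X_j)`.
-/

open MeasureTheory ProbabilityTheory Set
open scoped ENNReal

lemma one_le_rpow_neg_mul_rpow {t a ξ : ℝ} (ht : 0 < t) (hξ : 0 ≤ ξ) (hta : t ≤ a) :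
    1 ≤ t ^ (-ξ) * a ^ ξ := by
  have htξ : 0 < t ^ ξ := Real.rpow_pos_of_pos ht ξ
  calc (1 : ℝ) = t ^ (-ξ) * t ^ ξ := by rw [Real.rpow_neg ht.le, inv_mul_cancel₀ htξ.ne']
    _ ≤ t ^ (-ξ) * a ^ ξ := by gcongr

lemma div_two_rpow_neg {u : ℝ} (hu : 0 ≤ u) (ξ : ℝ) : (u / 2) ^ (-ξ) = 2 ^ ξ * u ^ (-ξ) := by
  rw [Real.div_rpow hu zero_le_two, Real.rpow_neg zero_le_two, div_inv_eq_mul, mul_comm]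

section

variable {Ω : Type*} [MeasurableSpace Ω] {μ : Measure Ω}

lemma measure_inter_setOf_lt_le_setLIntegral_rpow {A : Set Ω} (hA : MeasurableSet A)
    {f : Ω → ℝ} (hf : Measurable f) {t ξ : ℝ} (ht : 0 < t) (hξ : 0 ≤ ξ) :
    μ (A ∩ {ω | t < f ω}) ≤ ENNReal.ofReal (t ^ (-ξ)) * ∫⁻ ω in A, ENNReal.ofReal (f ω ^ ξ) ∂μ := by
  have hS : MeasurableSet {ω | t < f ω} := measurableSet_lt measurable_const hf
  have hpoint : ∀ ω, {ω | t < f ω}.indicator 1 ω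
      ≤ ENNReal.ofReal (t ^ (-ξ)) * ENNReal.ofReal (f ω ^ ξ) := by
    intro ω
    by_cases hω : t < f ω
    · rw [indicator_of_mem (show ω ∈ {ω | t < f ω} from hω), Pi.one_apply, ← ENNReal.ofReal_one,
        ← ENNReal.ofReal_mul (Real.rpow_nonneg ht.le _)]
      exact ENNReal.ofReal_le_ofReal (one_le_rpow_neg_mul_rpow ht hξ hω.le)
    · rw [indicator_of_notMem (show ω ∉ {ω | t < f ω} from hω)]
      exact zero_le
  calc μ (A ∩ {ω | t < f ω}) = ∫⁻ ω in A, {ω | t < f ω}.indicator 1 ω ∂μ := by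
        rw [lintegral_indicator_one hS, Measure.restrict_apply' hA, inter_comm]
    _ ≤ ∫⁻ ω in A, ENNReal.ofReal (t ^ (-ξ)) * ENNReal.ofReal (f ω ^ ξ) ∂μ := lintegral_mono hpoint
    _ = _ := lintegral_const_mul' _ _ ENNReal.ofReal_ne_top

lemma setLIntegral_mul_rpow_eq_of_indepFun {Y X₀ X : Ω → ℝ} (hY : 0 ≤ Y) (hX : 0 ≤ X) (hYm : Measurable Y) (hX₀m : Measurable X₀)
    (hXm : Measurable X) (hindep : IndepFun Y (fun ω => (X₀ ω, X ω)) μ) (u ξ : ℝ) :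
    ∫⁻ ω in {ω | u < min (X₀ ω) (X ω)}, ENNReal.ofReal ((Y ω * X ω) ^ ξ) ∂μ
      = (∫⁻ ω, ENNReal.ofReal (Y ω ^ ξ) ∂μ)
        * ∫⁻ ω, (if X₀ ω > u ∧ X ω > u then ENNReal.ofReal (X ω ^ ξ) else 0) ∂μ := by
  set ψ : ℝ × ℝ → ℝ≥0∞ := fun p => if p.1 > u ∧ p.2 > u then ENNReal.ofReal (p.2 ^ ξ) else 0
  have hψ : Measurable ψ :=
    Measurable.ite ((measurableSet_lt measurable_const measurable_fst).inter
      (measurableSet_lt measurable_const measurable_snd)) (by fun_prop) measurable_const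
  have hφ : Measurable fun y : ℝ => ENNReal.ofReal (y ^ ξ) := by fun_prop
  have hfactor : {ω | u < min (X₀ ω) (X ω)}.indicator (fun ω => ENNReal.ofReal ((Y ω * X ω) ^ ξ))
      = fun ω => ENNReal.ofReal (Y ω ^ ξ) * ψ (X₀ ω, X ω) := by
    ext ω
    by_cases hω : u < X₀ ω ∧ u < X ω
    · simp only [indicator, mem_ofPred_eq, lt_min_iff, hω, ψ, gt_iff_lt, and_self, if_true,
        Real.mul_rpow (hY ω) (hX ω), ENNReal.ofReal_mul (Real.rpow_nonneg (hY ω) ξ)]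
    · simp only [indicator, mem_ofPred_eq, lt_min_iff, hω, ψ, gt_iff_lt, if_false, mul_zero]
  rw [← lintegral_indicator (measurableSet_lt measurable_const (hX₀m.min hXm)), hfactor]
  exact lintegral_mul_eq_lintegral_mul_lintegral_of_indepFun (hφ.comp hYm)
    (hψ.comp (hX₀m.prodMk hXm)) (hindep.comp hφ hψ)

end

theorem stmt3_general {Ω : Type*} [MeasurableSpace Ω] (P : Measure Ω)
    (X₀ Xj Pi V : Ω → ℝ)
    (hXjnn : ∀ ω, 0 ≤ Xj ω)
    (hPinn : ∀ ω, 0 ≤ Pi ω)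
    (hX₀m : Measurable X₀) (hXjm : Measurable Xj)
    (hPim : Measurable Pi)
    (hindep : IndepFun (fun ω => (Pi ω, V ω)) (fun ω => (X₀ ω, Xj ω)) P)
    (ξ : ℝ) (hξ : 0 < ξ) (u : ℝ) (hu : 0 < u)
    (Xk : Ω → ℝ) (hXk : Xk = fun ω => Pi ω * Xj ω + V ω) :
    P {ω | u < min (X₀ ω) (min (Xj ω) (Xk ω))}
      ≤ P {ω | u < min (X₀ ω) (Xj ω)} * P {ω | u / 2 < V ω}
        + ENNReal.ofReal ((2 : ℝ) ^ ξ * u ^ (-ξ)) * (∫⁻ ω, ENNReal.ofReal (Pi ω ^ ξ) ∂P)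
          * ∫⁻ ω, (if X₀ ω > u ∧ Xj ω > u then ENNReal.ofReal (Xj ω ^ ξ) else 0) ∂P := by
  subst hXk
  set A := {ω | u < min (X₀ ω) (Xj ω)}
  have hA : MeasurableSet A := measurableSet_lt measurable_const (hX₀m.min hXjm)
  have hsplit : {ω | u < min (X₀ ω) (min (Xj ω) (Pi ω * Xj ω + V ω))}
      ⊆ A ∩ {ω | u / 2 < V ω} ∪ A ∩ {ω | u / 2 < Pi ω * Xj ω} := by
    intro ω hω
    simp only [mem_ofPred_eq, lt_min_iff] at hω
    obtain ⟨h₀, hj, hk⟩ := hω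
    by_cases hV : u / 2 < V ω
    · exact Or.inl ⟨lt_min h₀ hj, hV⟩
    · exact Or.inr ⟨lt_min h₀ hj, show u / 2 < Pi ω * Xj ω by linarith⟩
  have hAV : P (A ∩ {ω | u / 2 < V ω}) = P A * P {ω | u / 2 < V ω} := by
    rw [inter_comm, mul_comm]
    exact hindep.measure_inter_preimage_eq_mul {p | u / 2 < p.2} {p | u < min p.1 p.2}
      (measurableSet_lt measurable_const measurable_snd)
      (measurableSet_lt measurable_const (measurable_fst.min measurable_snd))
  have hPiXj : P (A ∩ {ω | u / 2 < Pi ω * Xj ω})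
      ≤ ENNReal.ofReal ((2 : ℝ) ^ ξ * u ^ (-ξ)) * (∫⁻ ω, ENNReal.ofReal (Pi ω ^ ξ) ∂P)
        * ∫⁻ ω, (if X₀ ω > u ∧ Xj ω > u then ENNReal.ofReal (Xj ω ^ ξ) else 0) ∂P := by
    rw [mul_assoc, ← div_two_rpow_neg hu.le, ← setLIntegral_mul_rpow_eq_of_indepFun hPinn hXjnn
      hPim hX₀m hXjm (hindep.comp measurable_fst measurable_id) u ξ]
    exact measure_inter_setOf_lt_le_setLIntegral_rpow hA (hPim.mul hXjm) (half_pos hu) hξ.le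
  calc _ ≤ P (A ∩ {ω | u / 2 < V ω}) + P (A ∩ {ω | u / 2 < Pi ω * Xj ω}) :=
        (measure_mono hsplit).trans (measure_union_le _ _)
    _ ≤ _ := by rw [hAV]; gcongr

/-- The splitting inequality from Appendix B of the paper: if `(Π, V)` is independent of
`(X₀, X_j)` and `X_k = Π X_j + V`, then the triple exceedance probability is bounded by
`P(min{X₀,X_j} > u) P(V > u/2) + 2^ξ u^{-ξ} E[Π^ξ] E[X_j^ξ 1{X₀>u, X_j>u}]`. -/
theorem stmt3 {Ω : Type*} [MeasurableSpace Ω] (P : Measure Ω) [IsProbabilityMeasure P]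
    (X₀ Xj Pi V : Ω → ℝ)
    (hX₀nn : ∀ ω, 0 ≤ X₀ ω) (hXjnn : ∀ ω, 0 ≤ Xj ω)
    (hPinn : ∀ ω, 0 ≤ Pi ω) (hVnn : ∀ ω, 0 ≤ V ω)
    (hX₀m : Measurable X₀) (hXjm : Measurable Xj)
    (hPim : Measurable Pi) (hVm : Measurable V)
    (hindep : IndepFun (fun ω => (Pi ω, V ω)) (fun ω => (X₀ ω, Xj ω)) P)
    (ξ : ℝ) (hξ : 0 < ξ) (u : ℝ) (hu : 0 < u)
    (hPimom : ∫⁻ ω, ENNReal.ofReal (Pi ω ^ ξ) ∂P < ⊤)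
    (Xk : Ω → ℝ) (hXk : Xk = fun ω => Pi ω * Xj ω + V ω) :
    P {ω | u < min (X₀ ω) (min (Xj ω) (Xk ω))}
      ≤ P {ω | u < min (X₀ ω) (Xj ω)} * P {ω | u / 2 < V ω}
        + ENNReal.ofReal ((2 : ℝ) ^ ξ * u ^ (-ξ)) * (∫⁻ ω, ENNReal.ofReal (Pi ω ^ ξ) ∂P)
          * ∫⁻ ω, (if X₀ ω > u ∧ Xj ω > u then ENNReal.ofReal (Xj ω ^ ξ) else 0) ∂P :=
  stmt3_general P X₀ Xj Pi V hXjnn hPinn hX₀m hXjm hPim hindep ξ hξ u hu Xk hXk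
end

section
/- Let X₀, Π, V be nonnegative random variables on a probability space (Ω, 𝓕, P) such that Π is independent of X₀ and V is independent of X₀. Let ξ > 0, u > 0, and set X_j := Π · X₀ + V. Then E[X_j^ξ · 1{X₀ > u, X_j > u}] ≤ 2^ξ · ( E[Π^ξ] · E[X₀^ξ · 1{X₀ > u}] + P(X₀ > u) · E[V^ξ · 1{V > u/2}] + (u/2)^ξ · P(X₀ > u, Π · X₀ > u/2) ). -/
/-!
On `{X₀ > u, X_j > u}` write `X_j = a + b` with `a = Π X₀`, `b = V`, and use
`(a + b)^ξ ≤ 2^ξ (a^ξ + b^ξ)`. If `b > u/2` the term `b^ξ` is kept and lands in the tail moment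
of `V`; otherwise `a > u/2` (since `a + b > u`) and `b^ξ ≤ (u/2)^ξ`. After integrating, the
independence of `X₀` from `Π` and from `V` factorises the first two terms.
-/

open MeasureTheory ProbabilityTheory
open scoped ENNReal

theorem ENNReal.ofReal_rpow_add_le_of_lt_add {a b u p : ℝ} (ha : 0 ≤ a) (hb : 0 ≤ b)
    (hp : 0 ≤ p) (hab : u < a + b) :
    ENNReal.ofReal ((a + b) ^ p) ≤ ENNReal.ofReal (2 ^ p) *
      (ENNReal.ofReal (a ^ p) + (if u / 2 < b then ENNReal.ofReal (b ^ p) else 0)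
        + if u / 2 < a then ENNReal.ofReal ((u / 2) ^ p) else 0) := by
  calc ENNReal.ofReal ((a + b) ^ p)
      ≤ ENNReal.ofReal (2 ^ p) * (ENNReal.ofReal (a ^ p) + ENNReal.ofReal (b ^ p)) := by
        rw [← ofReal_rpow_of_nonneg (add_nonneg ha hb) hp, ofReal_add ha hb,
          ← ofReal_rpow_of_nonneg ha hp, ← ofReal_rpow_of_nonneg hb hp,
          ← ofReal_rpow_of_nonneg zero_le_two hp, ENNReal.ofReal_ofNat]
        exact add_rpow_le_two_rpow_mul_rpow_add_rpow _ _ hp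
    _ ≤ _ := by
        rw [add_assoc]
        gcongr
        split_ifs with hub hua
        · exact le_self_add
        · exact le_self_add
        · rw [zero_add]
          exact ofReal_le_ofReal (Real.rpow_le_rpow hb (not_lt.1 hub) hp)
        · linarith

theorem ProbabilityTheory.IndepFun.lintegral_comp_mul_comp {Ω β γ : Type*} [MeasurableSpace Ω]
    [MeasurableSpace β] [MeasurableSpace γ] {μ : Measure Ω} {X : Ω → β} {Y : Ω → γ}
    (h : IndepFun X Y μ) (hX : Measurable X) (hY : Measurable Y) {φ : β → ℝ≥0∞}
    {ψ : γ → ℝ≥0∞} (hφ : Measurable φ) (hψ : Measurable ψ) :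
    ∫⁻ ω, φ (X ω) * ψ (Y ω) ∂μ = (∫⁻ ω, φ (X ω) ∂μ) * ∫⁻ ω, ψ (Y ω) ∂μ :=
  lintegral_mul_eq_lintegral_mul_lintegral_of_indepFun (hφ.comp hX) (hψ.comp hY) (h.comp hφ hψ)

theorem MeasureTheory.lintegral_ite_one {Ω : Type*} [MeasurableSpace Ω] {μ : Measure Ω}
    {p : Ω → Prop} [DecidablePred p] (hp : MeasurableSet {ω | p ω}) :
    ∫⁻ ω, (if p ω then 1 else 0) ∂μ = μ {ω | p ω} := by
  simpa [Set.indicator_apply] using lintegral_indicator_one (μ := μ) hp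

theorem stmt4_general {Ω : Type*} [MeasurableSpace Ω] (P : Measure Ω)
    (X₀ Pi V : Ω → ℝ)
    (hX₀nn : ∀ ω, 0 ≤ X₀ ω) (hPinn : ∀ ω, 0 ≤ Pi ω) (hVnn : ∀ ω, 0 ≤ V ω)
    (hX₀m : Measurable X₀) (hPim : Measurable Pi) (hVm : Measurable V)
    (hindep₁ : IndepFun Pi X₀ P) (hindep₂ : IndepFun V X₀ P)
    (ξ : ℝ) (hξ : 0 < ξ) (u : ℝ)
    (Xj : Ω → ℝ) (hXj : Xj = fun ω => Pi ω * X₀ ω + V ω) :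
    ∫⁻ ω, (if X₀ ω > u ∧ Xj ω > u then ENNReal.ofReal (Xj ω ^ ξ) else 0) ∂P
      ≤ ENNReal.ofReal ((2 : ℝ) ^ ξ) *
        ( (∫⁻ ω, ENNReal.ofReal (Pi ω ^ ξ) ∂P)
            * (∫⁻ ω, (if X₀ ω > u then ENNReal.ofReal (X₀ ω ^ ξ) else 0) ∂P)
          + P {ω | X₀ ω > u}
            * (∫⁻ ω, (if V ω > u / 2 then ENNReal.ofReal (V ω ^ ξ) else 0) ∂P)
          + ENNReal.ofReal ((u / 2) ^ ξ)
            * P {ω | X₀ ω > u ∧ Pi ω * X₀ ω > u / 2} ) := by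
  subst hXj
  have hrpow : Measurable fun x : ℝ => ENNReal.ofReal (x ^ ξ) := by fun_prop
  have htail (t : ℝ) : Measurable fun x : ℝ => if x > t then ENNReal.ofReal (x ^ ξ) else 0 :=
    hrpow.ite measurableSet_Ioi measurable_const
  have hgt : Measurable fun x : ℝ => if x > u then (1 : ℝ≥0∞) else 0 :=
    measurable_const.ite measurableSet_Ioi measurable_const
  have hjoint : MeasurableSet {ω | X₀ ω > u ∧ Pi ω * X₀ ω > u / 2} :=
    (measurableSet_lt measurable_const hX₀m).inter
      (measurableSet_lt measurable_const (hPim.mul hX₀m))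
  have hjoint_ite : Measurable fun ω =>
      if X₀ ω > u ∧ Pi ω * X₀ ω > u / 2 then (1 : ℝ≥0∞) else 0 :=
    measurable_const.ite hjoint measurable_const
  calc _ ≤ ∫⁻ ω, ENNReal.ofReal (2 ^ ξ) *
        (ENNReal.ofReal (Pi ω ^ ξ) * (if X₀ ω > u then ENNReal.ofReal (X₀ ω ^ ξ) else 0)
          + (if X₀ ω > u then 1 else 0) * (if V ω > u / 2 then ENNReal.ofReal (V ω ^ ξ) else 0)
          + ENNReal.ofReal ((u / 2) ^ ξ) *
              (if X₀ ω > u ∧ Pi ω * X₀ ω > u / 2 then 1 else 0)) ∂P := by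
        refine lintegral_mono fun ω => ?_
        by_cases h : X₀ ω > u ∧ Pi ω * X₀ ω + V ω > u
        · obtain ⟨hx, hj⟩ := h
          have hsplit := ENNReal.ofReal_rpow_add_le_of_lt_add (mul_nonneg (hPinn ω) (hX₀nn ω))
            (hVnn ω) hξ.le hj
          rw [Real.mul_rpow (hPinn ω) (hX₀nn ω),
            ENNReal.ofReal_mul (Real.rpow_nonneg (hPinn ω) ξ)] at hsplit
          simpa [hx, hj] using hsplit
        · simp only [if_neg h, zero_le]
    _ = _ := by
        rw [lintegral_const_mul' _ _ ENNReal.ofReal_ne_top,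
          lintegral_add_right _ (hjoint_ite.const_mul _),
          lintegral_add_right _ ?measurable_tail_V,
          lintegral_const_mul _ hjoint_ite, lintegral_ite_one hjoint,
          hindep₁.lintegral_comp_mul_comp hPim hX₀m hrpow (htail u),
          hindep₂.symm.lintegral_comp_mul_comp hX₀m hVm hgt (htail _),
          lintegral_ite_one (measurableSet_lt measurable_const hX₀m)]
        case measurable_tail_V => exact (hgt.comp hX₀m).mul ((htail _).comp hVm)

/-- The intermediate cross-moment bound from Appendix B of the paper: if `Π` and `V` are
each independent of `X₀` and `X_j = Π X₀ + V`, then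
`E[X_j^ξ 1{X₀>u, X_j>u}] ≤ 2^ξ ( E[Π^ξ] E[X₀^ξ 1{X₀>u}] + P(X₀>u) E[V^ξ 1{V>u/2}]
  + (u/2)^ξ P(X₀>u, Π X₀ > u/2) )`. -/
theorem stmt4 {Ω : Type*} [MeasurableSpace Ω] (P : Measure Ω) [IsProbabilityMeasure P]
    (X₀ Pi V : Ω → ℝ)
    (hX₀nn : ∀ ω, 0 ≤ X₀ ω) (hPinn : ∀ ω, 0 ≤ Pi ω) (hVnn : ∀ ω, 0 ≤ V ω)
    (hX₀m : Measurable X₀) (hPim : Measurable Pi) (hVm : Measurable V)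
    (hindep₁ : IndepFun Pi X₀ P) (hindep₂ : IndepFun V X₀ P)
    (ξ : ℝ) (hξ : 0 < ξ) (u : ℝ) (hu : 0 < u)
    (Xj : Ω → ℝ) (hXj : Xj = fun ω => Pi ω * X₀ ω + V ω) :
    ∫⁻ ω, (if X₀ ω > u ∧ Xj ω > u then ENNReal.ofReal (Xj ω ^ ξ) else 0) ∂P
      ≤ ENNReal.ofReal ((2 : ℝ) ^ ξ) *
        ( (∫⁻ ω, ENNReal.ofReal (Pi ω ^ ξ) ∂P)
            * (∫⁻ ω, (if X₀ ω > u then ENNReal.ofReal (X₀ ω ^ ξ) else 0) ∂P)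
          + P {ω | X₀ ω > u}
            * (∫⁻ ω, (if V ω > u / 2 then ENNReal.ofReal (V ω ^ ξ) else 0) ∂P)
          + ENNReal.ofReal ((u / 2) ^ ξ)
            * P {ω | X₀ ω > u ∧ Pi ω * X₀ ω > u / 2} ) :=
  stmt4_general P X₀ Pi V hX₀nn hPinn hVnn hX₀m hPim hVm hindep₁ hindep₂ ξ hξ u Xj hXj
end

section
/- Let X be a nonnegative random variable on a probability space (Ω, 𝓕, P), let τ > 0, κ > τ, C ≥ 0 and u > 0, and suppose that P(X > t·u) ≤ C · t^{−κ} · P(X > u) for all real t ≥ 1. Then E[(X/u)^τ · 1{X > u}] ≤ (1 + C·τ/(κ−τ)) · P(X > u). -/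
open MeasureTheory
open scoped ENNReal

/-!
By the layer-cake formula, `E[g]` for `g = (X/u)^τ 1{X > u}` is `∫₀^∞ P(g > t) dt`. On `(0, 1]`
the integrand is at most `P(X > u)`; for `t > 1` the event `{g > t}` is `{X > t^{1/τ} u}`, so the
Potter bound gives `P(g > t) ≤ C t^{-κ/τ} P(X > u)`, which integrates to `C τ/(κ - τ) P(X > u)`
because `κ/τ > 1`.
-/

open Set

theorem lintegral_ofReal_le_of_measure_lt_le {α : Type*} [MeasurableSpace α] {μ : Measure α}
    {f : α → ℝ} {s : Set α} {φ : ℝ → ℝ≥0∞} (hf_nn : 0 ≤ᵐ[μ] f) (hf : AEMeasurable f μ)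
    (hφ : AEMeasurable φ (volume.restrict (Ioi 1)))
    (hsupp : {a | 0 < f a} ⊆ s) (htail : ∀ t > 1, μ {a | t < f a} ≤ φ t * μ s) :
    ∫⁻ a, ENNReal.ofReal (f a) ∂μ ≤ (1 + ∫⁻ t in Ioi 1, φ t) * μ s := by
  have hsmall : ∫⁻ t in Ioc (0 : ℝ) 1, μ {a | t < f a} ≤ μ s :=
    calc ∫⁻ t in Ioc (0 : ℝ) 1, μ {a | t < f a}
        ≤ ∫⁻ _ in Ioc (0 : ℝ) 1, μ s := setLIntegral_mono' measurableSet_Ioc fun t ht =>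
          measure_mono fun a ha => hsupp (ht.1.trans ha)
      _ = μ s := by simp
  have hlarge : ∫⁻ t in Ioi (1 : ℝ), μ {a | t < f a} ≤ (∫⁻ t in Ioi 1, φ t) * μ s :=
    calc ∫⁻ t in Ioi (1 : ℝ), μ {a | t < f a}
        ≤ ∫⁻ t in Ioi 1, φ t * μ s := setLIntegral_mono' measurableSet_Ioi htail
      _ = (∫⁻ t in Ioi 1, φ t) * μ s := lintegral_mul_const'' _ hφ
  calc ∫⁻ a, ENNReal.ofReal (f a) ∂μ
      = ∫⁻ t in Ioc 0 1 ∪ Ioi 1, μ {a | t < f a} := by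
        rw [Ioc_union_Ioi_eq_Ioi zero_le_one, lintegral_eq_lintegral_meas_lt μ hf_nn hf]
    _ ≤ (∫⁻ t in Ioc 0 1, μ {a | t < f a}) + ∫⁻ t in Ioi 1, μ {a | t < f a} :=
        lintegral_union_le _ _ _
    _ ≤ μ s + (∫⁻ t in Ioi 1, φ t) * μ s := add_le_add hsmall hlarge
    _ = (1 + ∫⁻ t in Ioi 1, φ t) * μ s := by rw [add_mul, one_mul]

theorem lintegral_Ioi_one_ofReal_rpow_neg {p : ℝ} (hp : 1 < p) :
    ∫⁻ t in Ioi (1 : ℝ), ENNReal.ofReal (t ^ (-p)) = ENNReal.ofReal (1 / (p - 1)) := by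
  have hp' : -p < -1 := neg_lt_neg hp
  rw [← ofReal_integral_eq_lintegral_ofReal (integrableOn_Ioi_rpow_of_lt hp' one_pos),
    integral_Ioi_rpow_of_lt hp' one_pos, Real.one_rpow]
  · congr 1
    rw [show -p + 1 = -(p - 1) by ring, div_neg, neg_div, neg_neg]
  · filter_upwards [self_mem_ae_restrict measurableSet_Ioi] with t ht
    exact Real.rpow_nonneg (zero_le_one.trans ht.le) _

theorem measure_lt_ite_rpow_div_le_of_potter {Ω : Type*} [MeasurableSpace Ω] {P : Measure Ω}
    {X : Ω → ℝ} {τ κ C u : ℝ} (hτ : 0 < τ) (hu : 0 < u)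
    (hpotter : ∀ t : ℝ, 1 ≤ t →
      P {ω | t * u < X ω} ≤ ENNReal.ofReal (C * t ^ (-κ)) * P {ω | u < X ω})
    {t : ℝ} (ht : 1 < t) :
    P {ω | t < if u < X ω then (X ω / u) ^ τ else 0}
      ≤ ENNReal.ofReal (C * t ^ (-(κ / τ))) * P {ω | u < X ω} := by
  have ht0 : 0 < t := zero_lt_one.trans ht
  have hevent : {ω | t < if u < X ω then (X ω / u) ^ τ else 0} ⊆ {ω | t ^ τ⁻¹ * u < X ω} := by
    intro ω hω
    simp only [mem_ofPred_eq] at hω ⊢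
    split_ifs at hω with hX
    · have hXu : 0 ≤ X ω / u := div_nonneg (hu.le.trans hX.le) hu.le
      rw [← Real.rpow_inv_lt_iff_of_pos ht0.le hXu hτ, lt_div_iff₀ hu] at hω
      exact hω
    · linarith
  have hpow : (t ^ τ⁻¹) ^ (-κ) = t ^ (-(κ / τ)) := by
    rw [← Real.rpow_mul ht0.le, inv_mul_eq_div, neg_div]
  calc P {ω | t < if u < X ω then (X ω / u) ^ τ else 0}
      ≤ P {ω | t ^ τ⁻¹ * u < X ω} := measure_mono hevent
    _ ≤ ENNReal.ofReal (C * t ^ (-(κ / τ))) * P {ω | u < X ω} := by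
        rw [← hpow]
        exact hpotter _ (Real.one_le_rpow ht.le (inv_nonneg.2 hτ.le))

theorem stmt7_general {Ω : Type*} [MeasurableSpace Ω] (P : Measure Ω)
    (X : Ω → ℝ) (hXm : Measurable X)
    (τ κ C u : ℝ) (hτ : 0 < τ) (hκ : τ < κ) (hC : 0 ≤ C) (hu : 0 < u)
    (hpotter : ∀ t : ℝ, 1 ≤ t →
      P {ω | t * u < X ω} ≤ ENNReal.ofReal (C * t ^ (-κ)) * P {ω | u < X ω}) :
    ∫⁻ ω, (if u < X ω then ENNReal.ofReal ((X ω / u) ^ τ) else 0) ∂P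
      ≤ ENNReal.ofReal (1 + C * τ / (κ - τ)) * P {ω | u < X ω} := by
  set g : Ω → ℝ := fun ω => if u < X ω then (X ω / u) ^ τ else 0
  have hg_nn : ∀ ω, 0 ≤ g ω := fun ω => by
    dsimp only [g]
    split_ifs with hX
    exacts [Real.rpow_nonneg (div_nonneg (hu.le.trans hX.le) hu.le) _, le_rfl]
  have hg : Measurable g :=
    (hXm.div_const u).pow_const τ |>.ite (measurableSet_lt measurable_const hXm) measurable_const
  have hsupp : {ω | 0 < g ω} ⊆ {ω | u < X ω} := fun ω hω => by
    by_contra hX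
    exact (show 0 < g ω from hω).ne' (if_neg hX)
  have hp : 1 < κ / τ := (one_lt_div hτ).2 hκ
  calc ∫⁻ ω, (if u < X ω then ENNReal.ofReal ((X ω / u) ^ τ) else 0) ∂P
      = ∫⁻ ω, ENNReal.ofReal (g ω) ∂P := lintegral_congr fun ω => by
        dsimp only [g]
        split_ifs <;> simp
    _ ≤ (1 + ∫⁻ t in Ioi 1, ENNReal.ofReal (C * t ^ (-(κ / τ)))) * P {ω | u < X ω} :=
        lintegral_ofReal_le_of_measure_lt_le (Filter.Eventually.of_forall hg_nn) hg.aemeasurable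
          (by fun_prop) hsupp fun t ht => measure_lt_ite_rpow_div_le_of_potter hτ hu hpotter ht
    _ = ENNReal.ofReal (1 + C * τ / (κ - τ)) * P {ω | u < X ω} := by
        simp_rw [ENNReal.ofReal_mul hC]
        rw [lintegral_const_mul' _ _ ENNReal.ofReal_ne_top, lintegral_Ioi_one_ofReal_rpow_neg hp,
          ← ENNReal.ofReal_mul hC, ← ENNReal.ofReal_one,
          ← ENNReal.ofReal_add zero_le_one (by positivity)]
        congr 2
        field_simp [(sub_pos.2 hκ).ne']

/-- Quantitative content of inequality (B.1) of the paper: a Potter-type tail bound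
`P(X > t u) ≤ C t^{-κ} P(X > u)` for `t ≥ 1` implies
`E[(X/u)^τ 1{X > u}] ≤ (1 + C τ/(κ - τ)) P(X > u)` for `0 < τ < κ`. -/
theorem stmt7 {Ω : Type*} [MeasurableSpace Ω] (P : Measure Ω) [IsProbabilityMeasure P]
    (X : Ω → ℝ) (hXnn : ∀ ω, 0 ≤ X ω) (hXm : Measurable X)
    (τ κ C u : ℝ) (hτ : 0 < τ) (hκ : τ < κ) (hC : 0 ≤ C) (hu : 0 < u)
    (hpotter : ∀ t : ℝ, 1 ≤ t →
      P {ω | t * u < X ω} ≤ ENNReal.ofReal (C * t ^ (-κ)) * P {ω | u < X ω}) :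
    ∫⁻ ω, (if u < X ω then ENNReal.ofReal ((X ω / u) ^ τ) else 0) ∂P
      ≤ ENNReal.ofReal (1 + C * τ / (κ - τ)) * P {ω | u < X ω} :=
  stmt7_general P X hXm τ κ C u hτ hκ hC hu hpotter
end

section
/- Fix positive integers m and r, real numbers α > 0, y₀ > 0 and ε ∈ (0,1). For each l ∈ {1,…,m} let λ_l ∈ ℝ and let a_{l,i} ≥ 0, c_{l,i} ≥ 0 for i ∈ {1,…,r}. For y ∈ [y₀, ∞) and s ∈ [1−ε, 1+ε] define f_{y,s}(l) := ∑_{i=1}^r (a_{l,i}/c_{l,i})^α · 1{c_{l,i} > y·a_{l,i}} · 1{a_{l,i} > 0} · 1{c_{l,i} > s} (each summand being 0 when its indicators fail), and define S(y,s) := { l ∈ {1,…,m} : λ_l < f_{y,s}(l) }. Then the collection { S(y,s) : y ∈ [y₀,∞), s ∈ [1−ε,1+ε] } contains at most (m·r + 1)² distinct subsets of {1,…,m}. -/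
/-!
The set `S(y,s)` depends on `(y,s)` only through the two sets of index pairs `(l,i)` with
`y a_{l,i} < c_{l,i}` and with `s < c_{l,i}`. Since `a ≥ 0`, each of them is antitone in its
parameter, so it runs through a chain of subsets of the `mr`-element index set, and such a chain
has at most `mr + 1` members (distinct members have distinct cardinalities).
-/

open Set

theorem Set.ncard_le_card_add_one_of_isChain {α : Type*} [Fintype α] {S : Set (Finset α)}
    (hS : IsChain (· ≤ ·) S) : S.ncard ≤ Fintype.card α + 1 := by
  calc S.ncard ≤ (Iic (Fintype.card α)).ncard := by
        refine ncard_le_ncard_of_injOn Finset.card (fun F _ ↦ F.card_le_univ) ?_ (finite_Iic _)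
        intro F hF G hG hcard
        rcases hS.total hF hG with hFG | hGF
        · exact Finset.eq_of_subset_of_card_le hFG hcard.ge
        · exact (Finset.eq_of_subset_of_card_le hGF hcard.le).symm
    _ = Fintype.card α + 1 := ncard_Iic_nat _

theorem Set.ncard_image2_le {α β γ : Type*} (f : α → β → γ) {s : Set α} {t : Set β}
    (hs : s.Finite) (ht : t.Finite) : (image2 f s t).ncard ≤ s.ncard * t.ncard := by
  rw [← image_uncurry_prod, ← ncard_prod]
  exact ncard_image_le (hs.prod ht)

theorem Antitone.ncard_image_le_card_add_one {ι α : Type*} [Preorder ι] [Fintype α]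
    {f : ι → Finset α} (hf : Antitone f) {T : Set ι} (hT : IsChain (· ≤ ·) T) :
    (f '' T).ncard ≤ Fintype.card α + 1 :=
  ncard_le_card_add_one_of_isChain (hf.isChain_image hT)

theorem stmt8_general (m r : ℕ)
    (α y₀ ε : ℝ)
    (lam : Fin m → ℝ) (a c : Fin m → Fin r → ℝ)
    (ha : ∀ l i, 0 ≤ a l i) :
    Set.ncard { B : Set (Fin m) | ∃ y ∈ Set.Ici y₀, ∃ s ∈ Set.Icc (1 - ε) (1 + ε),
        B = {l : Fin m | lam l < ∑ i : Fin r,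
          (a l i / c l i) ^ α * (if y * a l i < c l i then (1 : ℝ) else 0)
            * (if 0 < a l i then 1 else 0) * (if s < c l i then 1 else 0)} }
      ≤ (m * r + 1) ^ 2 := by
  classical
  let A (y : ℝ) : Finset (Fin m × Fin r) := {p | y * a p.1 p.2 < c p.1 p.2}
  let C (s : ℝ) : Finset (Fin m × Fin r) := {p | s < c p.1 p.2}
  let Φ (P Q : Finset (Fin m × Fin r)) : Set (Fin m) := {l | lam l < ∑ i : Fin r,
    (a l i / c l i) ^ α * (if (l, i) ∈ P then (1 : ℝ) else 0)
      * (if 0 < a l i then 1 else 0) * (if (l, i) ∈ Q then 1 else 0)}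
  have hA : Antitone A := fun y₁ y₂ hy p hp ↦ by
    simp only [A, Finset.mem_filter_univ] at hp ⊢
    exact (mul_le_mul_of_nonneg_right hy (ha p.1 p.2)).trans_lt hp
  have hC : Antitone C := fun s₁ s₂ hs p hp ↦ by
    simp only [C, Finset.mem_filter_univ] at hp ⊢
    exact hs.trans_lt hp
  have hcard : Fintype.card (Fin m × Fin r) + 1 = m * r + 1 := by simp
  calc _ ≤ (image2 Φ (A '' Ici y₀) (C '' Icc (1 - ε) (1 + ε))).ncard :=
        ncard_le_ncard (by
          rintro B ⟨y, hy, s, hs, rfl⟩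
          exact ⟨A y, mem_image_of_mem A hy, C s, mem_image_of_mem C hs, by simp [Φ, A, C]⟩)
          (toFinite _)
    _ ≤ (A '' Ici y₀).ncard * (C '' Icc (1 - ε) (1 + ε)).ncard :=
        ncard_image2_le Φ (toFinite _) (toFinite _)
    _ ≤ (m * r + 1) * (m * r + 1) := hcard ▸ Nat.mul_le_mul
        (hA.ncard_image_le_card_add_one (isChain_of_trichotomous _))
        (hC.ncard_image_le_card_add_one (isChain_of_trichotomous _))
    _ = (m * r + 1) ^ 2 := (sq _).symm

/-- The picking bound from the proof of Proposition C.1 of the paper: the subgraph sets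
`S(y,s) = {l : λ_l < f_{y,s}(l)}` of the two-parameter family of functions
`f_{y,s}(l) = ∑_i (a_{l,i}/c_{l,i})^α 1{c_{l,i} > y a_{l,i}} 1{a_{l,i} > 0} 1{c_{l,i} > s}`
pick out at most `(mr+1)²` distinct subsets of `{1,…,m}`. -/
theorem stmt8 (m r : ℕ) (hm : 0 < m) (hr : 0 < r)
    (α y₀ ε : ℝ) (hα : 0 < α) (hy₀ : 0 < y₀) (hε : ε ∈ Set.Ioo (0 : ℝ) 1)
    (lam : Fin m → ℝ) (a c : Fin m → Fin r → ℝ)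
    (ha : ∀ l i, 0 ≤ a l i) (hc : ∀ l i, 0 ≤ c l i) :
    Set.ncard { B : Set (Fin m) | ∃ y ∈ Set.Ici y₀, ∃ s ∈ Set.Icc (1 - ε) (1 + ε),
        B = {l : Fin m | lam l < ∑ i : Fin r,
          (a l i / c l i) ^ α * (if y * a l i < c l i then (1 : ℝ) else 0)
            * (if 0 < a l i then 1 else 0) * (if s < c l i then 1 else 0)} }
      ≤ (m * r + 1) ^ 2 :=
  stmt8_general m r α y₀ ε lam a c ha
end

section
/- There exists a positive integer r₀ such that for all integers r ≥ r₀ and all positive integers m with m > 4·log r, one has (m·r + 1)² < 2^m; consequently, in the setting where, for λ_l ∈ ℝ and a_{l,i}, c_{l,i} ≥ 0 (l ∈ {1,…,m}, i ∈ {1,…,r}), α > 0, y₀ > 0, ε ∈ (0,1), one defines f_{y,s}(l) := ∑_{i=1}^r (a_{l,i}/c_{l,i})^α · 1{c_{l,i} > y·a_{l,i}} · 1{a_{l,i} > 0} · 1{c_{l,i} > s} and S(y,s) := { l ∈ {1,…,m} : λ_l < f_{y,s}(l) }, there exists a subset B ⊆ {1,…,m} with B ≠ S(y,s) for every y ∈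 [y₀,∞) and s ∈ [1−ε,1+ε]. -/
open Real Finset in
/-- The range of an antitone family of finsets is a chain, hence has at most
`Fintype.card β + 1` elements. -/
lemma chain_card_aux {β : Type*} [Fintype β] [DecidableEq β] (W : ℝ → Finset β)
    (hW : ∀ ⦃x x' : ℝ⦄, x ≤ x' → W x' ⊆ W x) :
    ((Set.toFinite (Set.range W)).toFinset).card ≤ Fintype.card β + 1 := by
  classical
  have h := Finset.card_le_card_of_injOn (s := (Set.toFinite (Set.range W)).toFinset)
      (t := Finset.range (Fintype.card β + 1)) (fun u : Finset β => u.card)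
      (fun u _ => by simpa [Finset.mem_range, Nat.lt_succ_iff] using Finset.card_le_univ u)
      ?_
  · exact h.trans_eq (Finset.card_range _)
  · intro u hu v hv huv
    rw [Set.Finite.coe_toFinset] at hu hv
    rw [Set.mem_range] at hu hv
    obtain ⟨x, rfl⟩ := hu
    obtain ⟨x', rfl⟩ := hv
    rcases le_total x x' with h' | h'
    · exact (Finset.eq_of_subset_of_card_le (hW h') huv.le).symm
    · exact Finset.eq_of_subset_of_card_le (hW h') huv.ge

/-- The VC-index claim from the proof of Proposition C.1 of the paper: for sufficiently
large `r`, whenever `m > 4 log r` one has `(mr+1)² < 2^m`; consequently the class of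
sets `S(y,s)` cannot shatter `{1,…,m}`, i.e. some subset `B` is never picked out. -/
theorem stmt9 : ∃ r₀ : ℕ, 0 < r₀ ∧ ∀ r : ℕ, r₀ ≤ r → ∀ m : ℕ, 0 < m →
    4 * Real.log r < m →
    ((m * r + 1) ^ 2 < 2 ^ m ∧
      ∀ (α y₀ ε : ℝ), 0 < α → 0 < y₀ → ε ∈ Set.Ioo (0 : ℝ) 1 →
      ∀ (lam : Fin m → ℝ) (a c : Fin m → Fin r → ℝ),
        (∀ l i, 0 ≤ a l i) → (∀ l i, 0 ≤ c l i) →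
        ∃ B : Set (Fin m), ∀ y ∈ Set.Ici y₀, ∀ s ∈ Set.Icc (1 - ε) (1 + ε),
          B ≠ {l : Fin m | lam l < ∑ i : Fin r,
            (a l i / c l i) ^ α * (if y * a l i < c l i then (1 : ℝ) else 0)
              * (if 0 < a l i then 1 else 0) * (if s < c l i then 1 else 0)}) := by
  classical
  refine ⟨⌈Real.exp 250⌉₊, by positivity, fun r hr m hm hlog => ?_⟩
  -- basic facts about r and m
  have hrR : Real.exp 250 ≤ (r : ℝ) := (Nat.ceil_le.mp hr)
  have hr1 : 1 ≤ r := le_trans (Nat.one_le_ceil_iff.mpr (Real.exp_pos _)) hr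
  have hlogr : (250 : ℝ) ≤ Real.log r := by
    have := Real.log_le_log (Real.exp_pos 250) hrR
    simpa [Real.log_exp] using this
  have hM1000 : (1000 : ℝ) < (m : ℝ) := by linarith
  have hMpos : (0 : ℝ) < (m : ℝ) := by linarith
  -- the counting inequality (mr+1)^2 < 2^m, proved over ℝ
  have hcount : ((m : ℕ) * r + 1) ^ 2 < 2 ^ m := by
    have hRpos : (0 : ℝ) < (r : ℝ) := by positivity
    set M : ℝ := (m : ℝ) with hMdef
    set t : ℝ := Real.sqrt M with htdef
    have ht2 : t ^ 2 = M := Real.sq_sqrt hMpos.le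
    have ht31 : (31 : ℝ) < t := by
      rw [htdef]
      rw [show (31 : ℝ) = Real.sqrt (31 ^ 2) by
        rw [Real.sqrt_sq (by norm_num)]]
      exact Real.sqrt_lt_sqrt (by positivity) (by norm_num; linarith)
    have hlogM : Real.log M ≤ 2 * t - 2 := by
      have h1 : Real.log t ≤ t - 1 := Real.log_le_sub_one_of_pos (by linarith)
      have h2 : Real.log t = Real.log M / 2 := Real.log_sqrt hMpos.le
      linarith
    have hlog2 : (0.6931471803 : ℝ) < Real.log 2 := Real.log_two_gt_d9
    have hlogr' : Real.log r < M / 4 := by rw [hMdef]; linarith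
    -- log (4 M^2 r^2) < M log 2
    have hkey : Real.log 4 + 2 * Real.log M + 2 * Real.log r < M * Real.log 2 := by
      have hlog4 : Real.log 4 = 2 * Real.log 2 := by
        rw [show (4 : ℝ) = 2 ^ 2 by norm_num, Real.log_pow]; push_cast; ring
      nlinarith [ht2, ht31, hlogM, hlog2, hlogr']
    have hreal : (4 : ℝ) * M ^ 2 * (r : ℝ) ^ 2 < 2 ^ m := by
      have hpos : (0 : ℝ) < 4 * M ^ 2 * (r : ℝ) ^ 2 := by positivity
      have hlhs : Real.log (4 * M ^ 2 * (r : ℝ) ^ 2)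
          = Real.log 4 + 2 * Real.log M + 2 * Real.log r := by
        rw [Real.log_mul (by positivity) (by positivity),
          Real.log_mul (by positivity) (by positivity), Real.log_pow, Real.log_pow]
        push_cast; ring
      have h2m : ((2 : ℝ) ^ m) = Real.exp (M * Real.log 2) := by
        rw [hMdef, Real.exp_nat_mul, Real.exp_log (by norm_num)]
      calc (4 : ℝ) * M ^ 2 * (r : ℝ) ^ 2 = Real.exp (Real.log (4 * M ^ 2 * (r : ℝ) ^ 2)) :=
              (Real.exp_log hpos).symm
        _ < Real.exp (M * Real.log 2) := Real.exp_lt_exp.mpr (by rw [hlhs]; exact hkey)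
        _ = 2 ^ m := h2m.symm
    have hcast : ((m : ℝ) * r + 1) ^ 2 < (2 : ℝ) ^ m := by
      have h1 : (1 : ℝ) ≤ M * r := by
        have : (1 : ℝ) * 1 ≤ M * r := by
          apply mul_le_mul (by linarith) (by exact_mod_cast hr1) (by norm_num) hMpos.le
        linarith
      nlinarith [hreal]
    exact_mod_cast hcast
  refine ⟨hcount, ?_⟩
  intro α y₀ ε hα hy₀ hε lam a c ha hc
  -- the two antitone families of finsets
  set U : ℝ → Finset (Fin m × Fin r) :=
    fun y => Finset.univ.filter (fun p => y * a p.1 p.2 < c p.1 p.2) with hU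
  set V : ℝ → Finset (Fin m × Fin r) :=
    fun s => Finset.univ.filter (fun p => s < c p.1 p.2) with hV
  have hUanti : ∀ ⦃x x' : ℝ⦄, x ≤ x' → U x' ⊆ U x := by
    intro x x' hxx p hp
    simp only [hU, Finset.mem_filter, Finset.mem_univ, true_and] at hp ⊢
    exact lt_of_le_of_lt (mul_le_mul_of_nonneg_right hxx (ha p.1 p.2)) hp
  have hVanti : ∀ ⦃x x' : ℝ⦄, x ≤ x' → V x' ⊆ V x := by
    intro x x' hxx p hp
    simp only [hV, Finset.mem_filter, Finset.mem_univ, true_and] at hp ⊢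
    exact lt_of_le_of_lt hxx hp
  set F : Finset (Fin m × Fin r) → Finset (Fin m × Fin r) → Set (Fin m) :=
    fun u v => {l : Fin m | lam l < ∑ i : Fin r,
      (a l i / c l i) ^ α * (if (l, i) ∈ u then (1 : ℝ) else 0)
        * (if 0 < a l i then 1 else 0) * (if (l, i) ∈ v then 1 else 0)} with hF
  have hFS : ∀ y s : ℝ, {l : Fin m | lam l < ∑ i : Fin r,
      (a l i / c l i) ^ α * (if y * a l i < c l i then (1 : ℝ) else 0)
        * (if 0 < a l i then 1 else 0) * (if s < c l i then 1 else 0)} = F (U y) (V s) := by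
    intro y s
    ext l
    simp [hF, hU, hV]
  -- finsets of possible values of U and V
  set TU : Finset (Finset (Fin m × Fin r)) := (Set.toFinite (Set.range U)).toFinset with hTU
  set TV : Finset (Finset (Fin m × Fin r)) := (Set.toFinite (Set.range V)).toFinset with hTV
  have hTUcard : TU.card ≤ m * r + 1 := by
    have := chain_card_aux U hUanti
    simpa [hTU] using this
  have hTVcard : TV.card ≤ m * r + 1 := by
    have := chain_card_aux V hVanti
    simpa [hTV] using this
  set G : Finset (Set (Fin m)) := (TU ×ˢ TV).image (fun p => F p.1 p.2) with hG
  have hGcard : G.card < 2 ^ m := by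
    calc G.card ≤ (TU ×ˢ TV).card := Finset.card_image_le
      _ = TU.card * TV.card := Finset.card_product _ _
      _ ≤ (m * r + 1) * (m * r + 1) := Nat.mul_le_mul hTUcard hTVcard
      _ = (m * r + 1) ^ 2 := (sq _).symm
      _ < 2 ^ m := hcount
  have hB : ∃ B : Set (Fin m), B ∉ G := by
    by_contra h
    push_neg at h
    have huniv : (Finset.univ : Finset (Set (Fin m))) ⊆ G := fun x _ => h x
    have := Finset.card_le_card huniv
    rw [Finset.card_univ, Fintype.card_set, Fintype.card_fin] at this
    omega
  obtain ⟨B, hBG⟩ := hB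
  refine ⟨B, fun y _ s _ hBeq => hBG ?_⟩
  rw [hFS y s] at hBeq
  rw [hG]
  refine Finset.mem_image.mpr ⟨(U y, V s), Finset.mem_product.mpr ⟨?_, ?_⟩, hBeq.symm⟩
  · simp [hTU]
  · simp [hTV]
end
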